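/- Let H be an infinite-dimensional separable complex Hilbert space. Consider the set 𝒩 of normal bounded linear operators on H (operators N with N*∘N = N∘N*), and the equivalence relation on 𝒩 given by N ∼ M iff there exists a unitary operator V on H with M = V⁻¹ ∘ N ∘ V. Then the quotient 𝒩/∼ (the set of unitary equivalence classes of normal operators on H) has cardinality equal to the continuum 𝔠 = 2^ℵ₀ (Cardinal.continuum). -/

import Mathlib

open scoped InnerProductSpace

noncomputable section

variable (H : Type*) [NormedAddCommGroup H] [InnerProductSpace ℂ H] [CompleteSpace H]

/-- The set of normal bounded linear operators on `H`. -/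
def NormalOps : Type _ :=
  {N : H →L[ℂ] H //
    ContinuousLinearMap.adjoint N ∘L N = N ∘L ContinuousLinearMap.adjoint N}

/-- Unitary equivalence of normal operators: `N ∼ M` iff `M = V⁻¹ ∘ N ∘ V` for some unitary
`V` on `H` (here `V⁻¹ = (↑(V⁻¹) : H →L[ℂ] H)` within the unitary group, and composition is
multiplication of operators). -/
def unitEquiv (N M : NormalOps H) : Prop :=
  ∃ V : ↥(unitary (H →L[ℂ] H)), M.1 = (↑(V⁻¹) : H →L[ℂ] H) * N.1 * (↑V : H →L[ℂ] H)

/-! Upper bound: a bounded operator is determined by its values on a countable dense set, so there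
are at most `𝔠 ^ ℵ₀ = 𝔠` of them. Lower bound: the spectrum is a unitary invariant, and the normal
operators `c • 1` have pairwise distinct spectra `{c}`. -/

open Cardinal TopologicalSpace Filter Topology

universe u v

theorem Cardinal.mk_arrow_le_continuum {α : Type u} {β : Type v} [Countable α] (hβ : #β ≤ 𝔠) :
    #(α → β) ≤ 𝔠 :=
  calc #(α → β) = lift.{u} #β ^ lift.{v} #α := mk_arrow α β
    _ ≤ 𝔠 ^ ℵ₀ := (power_le_power_right (lift_le_continuum.2 hβ)).trans
      (power_le_power_left continuum_ne_zero (lift_le_aleph0.2 mk_le_aleph0))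
    _ = 𝔠 := continuum_power_aleph0

theorem Cardinal.mk_le_continuum_of_separableSpace (X : Type u) [TopologicalSpace X]
    [SeparableSpace X] [FirstCountableTopology X] [T2Space X] : #X ≤ 𝔠 := by
  obtain ⟨s, hsc, hsd⟩ := exists_countable_dense X
  have : Countable s := hsc.to_subtype
  have hseq (x : X) : ∃ u : ℕ → s, Tendsto (fun n ↦ (u n : X)) atTop (𝓝 x) := by
    obtain ⟨u, hus, hux⟩ := mem_closure_iff_seq_limit.1 (hsd.closure_eq ▸ Set.mem_univ x)
    exact ⟨fun n ↦ ⟨u n, hus n⟩, hux⟩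
  choose u hu using hseq
  have hinj : Function.Injective u := fun x y h ↦ tendsto_nhds_unique (hu x) (h ▸ hu y)
  exact (mk_le_of_injective hinj).trans
    (mk_arrow_le_continuum ((mk_le_aleph0 (α := s)).trans aleph0_le_continuum))

theorem ContinuousMap.mk_le_continuum (X : Type u) (Y : Type v) [TopologicalSpace X]
    [TopologicalSpace Y] [SeparableSpace X] [T2Space Y] (hY : #Y ≤ 𝔠) : #C(X, Y) ≤ 𝔠 := by
  obtain ⟨s, hsc, hsd⟩ := exists_countable_dense X
  have : Countable s := hsc.to_subtype
  have hinj : Function.Injective fun (f : C(X, Y)) (x : s) ↦ f x := fun f g h ↦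
    ContinuousMap.ext fun x ↦ congrFun (Continuous.ext_on hsd f.continuous g.continuous
      fun y hy ↦ congrFun h ⟨y, hy⟩) x
  exact (mk_le_of_injective hinj).trans (mk_arrow_le_continuum hY)

theorem ContinuousLinearMap.mk_le_continuum {𝕜 : Type*} [NormedField 𝕜] (E : Type u) (F : Type v)
    [NormedAddCommGroup E] [NormedSpace 𝕜 E] [NormedAddCommGroup F] [NormedSpace 𝕜 F]
    [SeparableSpace E] [SeparableSpace F] : #(E →L[𝕜] F) ≤ 𝔠 :=
  (mk_le_of_injective (f := ((↑) : (E →L[𝕜] F) → C(E, F))) fun _ _ h ↦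
    ContinuousLinearMap.ext fun x ↦ congr($h x)).trans
    (ContinuousMap.mk_le_continuum E F (mk_le_continuum_of_separableSpace F))

section

variable {H}

lemma unitEquiv.spectrum_eq {N M : NormalOps H} (h : unitEquiv H N M) :
    spectrum ℂ M.1 = spectrum ℂ N.1 := by
  obtain ⟨V, hV⟩ := h
  rw [hV]
  exact spectrum.units_conjugate' (u := Unitary.toUnits V)

def NormalOps.scalar (c : ℂ) : NormalOps H :=
  ⟨c • 1, by
    simpa only [ContinuousLinearMap.star_eq_adjoint, ContinuousLinearMap.mul_def] using
      star_comm_self' (c • (1 : H →L[ℂ] H))⟩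

lemma NormalOps.spectrum_scalar [Nontrivial H] (c : ℂ) :
    spectrum ℂ (NormalOps.scalar (H := H) c).1 = {c} := by
  change spectrum ℂ (c • (1 : H →L[ℂ] H)) = {c}
  rw [← Algebra.algebraMap_eq_smul_one, spectrum.scalar_eq]

end

theorem stmt19 [TopologicalSpace.SeparableSpace H] (hinf : ¬ FiniteDimensional ℂ H) :
    Cardinal.mk (Quot (unitEquiv H)) = Cardinal.continuum := by
  refine le_antisymm ?_ ?_
  · calc #(Quot (unitEquiv H)) ≤ #(NormalOps H) := mk_quot_le
      _ ≤ #(H →L[ℂ] H) := mk_subtype_le _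
      _ ≤ 𝔠 := ContinuousLinearMap.mk_le_continuum H H
  · have : Nontrivial H := not_subsingleton_iff_nontrivial.1 fun _ ↦ hinf inferInstance
    let spec : Quot (unitEquiv H) → Set ℂ :=
      Quot.lift (fun N ↦ spectrum ℂ N.1) fun _ _ h ↦ h.spectrum_eq.symm
    have hinj : Function.Injective fun c ↦ Quot.mk (unitEquiv H) (NormalOps.scalar c) :=
      fun c d h ↦ by
        simpa [spec, NormalOps.spectrum_scalar] using congrArg spec h
    simpa [mk_complex] using lift_mk_le'.2 ⟨⟨_, hinj⟩⟩

end
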